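/- Let S be a nonempty open subset of ℝ^d and let Q be a bounded positive kernel on S, i.e. Q(x,·) is a nonnegative Borel measure on S for each x, measurable in x, with sup_{x∈S} Q(x,S) < ∞. Assume that for every x ∈ S and every nonempty open subset O of S there exists q(x,O) ∈ ℕ such that Q^k(x,O) > 0 for all k ≥ q(x,O). Let m ≥ 1 and let φ : S → ℝ be a bounded continuous nonnegative function satisfying Q^m φ = φ pointwise (i.e. φ(x) = ∫_S φ(y) Q^m(x,dy) for all x ∈ S) and φ(x₀) > 0 for some x₀ ∈ S. Then φ(x) > 0 for every x ∈ S. -/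

import Mathlib

/-!
If `φ = Q^m φ`, then also `φ = Q^{jm} φ` for every `j`, i.e. `φ(x) = ∫ φ dQ^{jm}(x, ·)`.
The set `{φ > 0}` is open (by continuity) and nonempty (it contains `x₀`), so by irreducibility
it has positive `Q^{jm}(x, ·)`-measure once `jm` is large; the integral of the nonnegative `φ`
over it is then positive, and hence so is `φ(x)`.
-/

open MeasureTheory ProbabilityTheory
open scoped ENNReal

/-- Iterates of a kernel: `kernelIter Q k` is `Q^k`, with `Q^0` the identity
(deterministic) kernel and `Q^{k+1}(x, A) = ∫ Q^k(y, A) Q(x, dy)`. -/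
noncomputable def kernelIter {α : Type*} [MeasurableSpace α] (Q : Kernel α α) : ℕ → Kernel α α
  | 0 => Kernel.deterministic id measurable_id
  | n + 1 => (kernelIter Q n) ∘ₖ Q

section KernelIter

variable {α : Type*} [MeasurableSpace α] (Q : Kernel α α)

lemma kernelIter_zero : kernelIter Q 0 = Kernel.id := rfl

instance isFiniteKernel_kernelIter [IsFiniteKernel Q] (k : ℕ) :
    IsFiniteKernel (kernelIter Q k) := by
  induction k with
  | zero => rw [kernelIter_zero]; infer_instance
  | succ k _ => exact Kernel.IsFiniteKernel.comp (kernelIter Q k) Q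

lemma kernelIter_add (a b : ℕ) :
    kernelIter Q (a + b) = kernelIter Q a ∘ₖ kernelIter Q b := by
  induction b with
  | zero => rw [Nat.add_zero, kernelIter_zero, Kernel.comp_id]
  | succ b ih => rw [← Nat.add_assoc, kernelIter, ih, Kernel.comp_assoc]; rfl

variable {Q}

lemma lintegral_kernelIter_mul_eq {f : α → ℝ≥0∞} (hf : Measurable f) {m : ℕ}
    (heig : ∀ x, ∫⁻ y, f y ∂kernelIter Q m x = f x) (j : ℕ) (x : α) :
    ∫⁻ y, f y ∂kernelIter Q (j * m) x = f x := by
  induction j generalizing x with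
  | zero => rw [Nat.zero_mul, kernelIter_zero, Kernel.id_apply, lintegral_dirac' _ hf]
  | succ j ih =>
    rw [Nat.succ_mul, kernelIter_add, Kernel.lintegral_comp _ _ _ hf]
    simp only [ih, heig]

theorem pos_of_lintegral_kernelIter_eq [TopologicalSpace α] [OpensMeasurableSpace α]
    (hirr : ∀ x : α, ∀ O : Set α, IsOpen O → O.Nonempty →
      ∃ q : ℕ, ∀ k, q ≤ k → 0 < kernelIter Q k x O)
    {m : ℕ} (hm : 1 ≤ m) {f : α → ℝ≥0∞} (hf : Continuous f)
    (heig : ∀ x, ∫⁻ y, f y ∂kernelIter Q m x = f x) {x₀ : α} (hx₀ : 0 < f x₀) (x : α) :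
    0 < f x := by
  have hsupp_open : IsOpen (Function.support f) := hf.isOpen_support
  obtain ⟨q, hq⟩ := hirr x _ hsupp_open ⟨x₀, hx₀.ne'⟩
  have hpos : 0 < kernelIter Q (q * m) x (Function.support f) :=
    hq _ (Nat.le_mul_of_pos_right q hm)
  rw [← lintegral_kernelIter_mul_eq hf.measurable heig q x]
  exact (lintegral_pos_iff_support hf.measurable).mpr hpos

end KernelIter

theorem stmt_3_general {d : ℕ} (S : Set (EuclideanSpace ℝ (Fin d)))
    (Q : Kernel S S) (hQbdd : IsFiniteKernel Q)
    (hirr : ∀ x : S, ∀ O : Set S, IsOpen O → O.Nonempty →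
      ∃ q : ℕ, ∀ k, q ≤ k → 0 < kernelIter Q k x O)
    (m : ℕ) (hm : 1 ≤ m)
    (φ : S → ℝ) (hφcont : Continuous φ) (hφbdd : ∃ M : ℝ, ∀ x, φ x ≤ M)
    (hφ0 : ∀ x, 0 ≤ φ x)
    (heig : ∀ x : S, φ x = ∫ y, φ y ∂(kernelIter Q m x))
    (x₀ : S) (hx₀ : 0 < φ x₀) :
    ∀ x : S, 0 < φ x := by
  obtain ⟨M, hM⟩ := hφbdd
  have hφint : ∀ x, Integrable φ (kernelIter Q m x) := fun x =>
    .of_bound hφcont.aestronglyMeasurable M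
      (.of_forall fun y => by rw [Real.norm_of_nonneg (hφ0 y)]; exact hM y)
  have heig' : ∀ x, ∫⁻ y, ENNReal.ofReal (φ y) ∂kernelIter Q m x = ENNReal.ofReal (φ x) := by
    intro x
    rw [heig x, ofReal_integral_eq_lintegral_ofReal (hφint x) (.of_forall hφ0)]
  intro x
  simpa using pos_of_lintegral_kernelIter_eq hirr hm (ENNReal.continuous_ofReal.comp hφcont)
    heig' (ENNReal.ofReal_pos.mpr hx₀) x

/-- Let `S` be a nonempty open subset of `ℝ^d` and `Q` a bounded positive
kernel on `S` such that for every `x` and every nonempty open `O ⊆ S`, `Q^k(x, O) > 0` for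
all large `k`. If `φ` is a bounded continuous nonnegative function with `Q^m φ = φ`
pointwise (`m ≥ 1`) and `φ(x₀) > 0` for some `x₀`, then `φ > 0` everywhere on `S`. -/
theorem stmt_3 {d : ℕ} (S : Set (EuclideanSpace ℝ (Fin d)))
    (hSopen : IsOpen S) (hSne : S.Nonempty)
    (Q : Kernel S S) (hQbdd : IsFiniteKernel Q)
    (hirr : ∀ x : S, ∀ O : Set S, IsOpen O → O.Nonempty →
      ∃ q : ℕ, ∀ k, q ≤ k → 0 < kernelIter Q k x O)
    (m : ℕ) (hm : 1 ≤ m)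
    (φ : S → ℝ) (hφcont : Continuous φ) (hφbdd : ∃ M : ℝ, ∀ x, φ x ≤ M)
    (hφ0 : ∀ x, 0 ≤ φ x)
    (heig : ∀ x : S, φ x = ∫ y, φ y ∂(kernelIter Q m x))
    (x₀ : S) (hx₀ : 0 < φ x₀) :
    ∀ x : S, 0 < φ x :=
  stmt_3_general S Q hQbdd hirr m hm φ hφcont hφbdd hφ0 heig x₀ hx₀
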